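/- Let A be a left nilpotent skew brace (A^n = 0 for some n, where A^1 = A and A^{k+1} = A * A^k) and X ⊆ A a subset whose image in A/A² generates A/A² as a strong left ideal. Then X generates A as a strong left ideal. -/

import Mathlib

/-- A skew (left) brace structure on an additive group `(A,+)`: a second group
operation `mul` (with inverse `inv`) sharing the identity `0`, satisfying
`a ∘ (b + c) = a ∘ b - a + a ∘ c`. -/
structure SkewBrace (A : Type*) [AddGroup A] where
  mul : A → A → A
  inv : A → A
  mul_assoc : ∀ a b c, mul (mul a b) c = mul a (mul b c)
  zero_mul : ∀ a, mul 0 a = a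
  mul_zero : ∀ a, mul a 0 = a
  inv_mul : ∀ a, mul (inv a) a = 0
  left_compat : ∀ a b c, mul a (b + c) = mul a b + -a + mul a c

/-- A strong left ideal: a normal subgroup of `(A,+)` stable under every `λ_a`. -/
def IsStrongLeftIdeal {A : Type*} [AddGroup A] (S : SkewBrace A)
    (I : AddSubgroup A) : Prop :=
  I.Normal ∧ ∀ a : A, ∀ x ∈ I, -a + S.mul a x ∈ I

/-- The star operation `a * b = -a + a∘b - b` of a skew brace. -/
def star {A : Type*} [AddGroup A] (S : SkewBrace A) (a b : A) : A :=
  -a + S.mul a b - b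

/-- The left series of a skew brace: `lpow S 0 = A^1 = A` and
`lpow S n = A^{n+1} = A * A^n`. -/
def lpow {A : Type*} [AddGroup A] (S : SkewBrace A) : ℕ → AddSubgroup A
  | 0 => ⊤
  | n + 1 => AddSubgroup.closure {z | ∃ a : A, ∃ b ∈ lpow S n, z = star S a b}

section Aux
variable {A : Type*} [AddGroup A] (S : SkewBrace A)

/-- `λ_a x = -a + a∘x`. -/
def sbLam (a x : A) : A := -a + S.mul a x

lemma sbLam_add (a x y : A) : sbLam S a (x + y) = sbLam S a x + sbLam S a y := by
  simp [sbLam, S.left_compat, add_assoc]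

lemma sbLam_zero (a : A) : sbLam S a 0 = 0 := by
  simp [sbLam, S.mul_zero]

lemma sbLam_neg (a x : A) : sbLam S a (-x) = -(sbLam S a x) := by
  have h := sbLam_add S a x (-x)
  rw [add_neg_cancel, sbLam_zero] at h
  exact (neg_eq_of_add_eq_zero_right h.symm).symm

lemma sb_mul_neg (a c : A) : S.mul a (-c) = a + -(S.mul a c) + a := by
  have h : S.mul a c + -a + S.mul a (-c) = a := by
    have h0 := S.left_compat a c (-c)
    rw [add_neg_cancel, S.mul_zero] at h0
    exact h0.symm
  calc S.mul a (-c) = a + -(S.mul a c) + (S.mul a c + -a + S.mul a (-c)) := by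
        simp [add_assoc]
    _ = a + -(S.mul a c) + a := by rw [h]

lemma sbLam_lam (a c x : A) : sbLam S a (sbLam S c x) = sbLam S (S.mul a c) x := by
  simp only [sbLam, S.left_compat, sb_mul_neg, ← S.mul_assoc]
  simp [add_assoc]

lemma sb_mul_inv (a : A) : S.mul a (S.inv a) = 0 := by
  calc S.mul a (S.inv a)
      = S.mul (S.mul (S.inv (S.inv a)) (S.inv a)) (S.mul a (S.inv a)) := by
        rw [S.inv_mul, S.zero_mul]
    _ = S.mul (S.inv (S.inv a)) (S.mul (S.mul (S.inv a) a) (S.inv a)) := by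
        rw [S.mul_assoc, S.mul_assoc]
    _ = 0 := by rw [S.inv_mul, S.zero_mul, S.inv_mul]

lemma sbStar_def (a b : A) : _root_.star S a b = sbLam S a b + -b := by
  show -a + S.mul a b - b = _
  simp [sbLam, sub_eq_add_neg, add_assoc]

lemma sbStar_zero (a : A) : _root_.star S a 0 = 0 := by
  simp [sbStar_def, sbLam_zero]

lemma sbStar_add (a x y : A) :
    _root_.star S a (x + y) = _root_.star S a x + x + _root_.star S a y + -x := by
  simp [sbStar_def, sbLam_add, add_assoc, neg_add_rev]

lemma sbStar_conj (g a b : A) :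
    g + _root_.star S a b + -g = -(_root_.star S a g) + _root_.star S a (g + b) := by
  rw [sbStar_add]
  simp [add_assoc]

lemma sbLam_star (a c b : A) :
    sbLam S a (_root_.star S c b) = _root_.star S (S.mul (S.mul a c) (S.inv a)) (sbLam S a b) := by
  rw [sbStar_def, sbStar_def, sbLam_add, sbLam_neg, sbLam_lam, sbLam_lam,
    S.mul_assoc (S.mul a c) (S.inv a) a, S.inv_mul, S.mul_zero]

lemma sbStar_mem_of_mem {I : AddSubgroup A} (hI : IsStrongLeftIdeal S I)
    {j : A} (hj : j ∈ I) (a : A) : _root_.star S a j ∈ I := by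
  have h1 : -a + S.mul a j ∈ I := hI.2 a j hj
  have : _root_.star S a j = (-a + S.mul a j) + -j := by
    show -a + S.mul a j - j = _
    simp [sub_eq_add_neg, add_assoc]
  rw [this]
  exact I.add_mem h1 (I.neg_mem hj)

end Aux

/-- For a left nilpotent skew brace `A`: if the image of `X` in `A/A²`
generates `A/A²` as a strong left ideal (equivalently, `X ∪ A²` generates `A`
as a strong left ideal), then `X` generates `A` as a strong left ideal. -/
theorem stmt_8 {A : Type*} [AddGroup A] (S : SkewBrace A)
    (hnil : ∃ n, lpow S n = ⊥) (X : Set A)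
    (hgen : ∀ I : AddSubgroup A, IsStrongLeftIdeal S I → X ⊆ (I : Set A) →
      (lpow S 1 : Set A) ⊆ (I : Set A) → I = ⊤) :
    ∀ I : AddSubgroup A, IsStrongLeftIdeal S I → X ⊆ (I : Set A) → I = ⊤ := by
  intro I hI hXI
  obtain ⟨n, hn⟩ := hnil
  haveI hN : I.Normal := hI.1
  set s1 : Set A := {z | ∃ a : A, ∃ b ∈ lpow S 0, z = star S a b} with hs1def
  have hlp1 : lpow S 1 = AddSubgroup.closure s1 := rfl
  set K : AddSubgroup A := AddSubgroup.closure ((I : Set A) ∪ s1) with hKdef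
  have hIK : (I : Set A) ⊆ (K : Set A) := fun x hx => AddSubgroup.subset_closure (Or.inl hx)
  have hs1K : s1 ⊆ (K : Set A) := fun x hx => AddSubgroup.subset_closure (Or.inr hx)
  have hs1mem : ∀ a b : A, star S a b ∈ K := fun a b =>
    hs1K ⟨a, b, AddSubgroup.mem_top b, rfl⟩
  have hKconj : ∀ x ∈ K, ∀ g : A, g + x + -g ∈ K := by
    intro x hx
    induction hx using AddSubgroup.closure_induction with
    | mem y hy =>
      intro g
      rcases hy with hy | ⟨a, b, -, rfl⟩
      · exact hIK (hN.conj_mem y hy g)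
      · rw [sbStar_conj]
        exact K.add_mem (K.neg_mem (hs1mem a g)) (hs1mem a (g + b))
    | zero =>
      intro g; simpa using K.zero_mem
    | add y z hy hz ihy ihz =>
      intro g
      have e : g + (y + z) + -g = (g + y + -g) + (g + z + -g) := by
        simp [add_assoc]
      rw [e]; exact K.add_mem (ihy g) (ihz g)
    | neg y hy ihy =>
      intro g
      have e : g + -y + -g = -(g + y + -g) := by
        simp [neg_add_rev, add_assoc]
      rw [e]; exact K.neg_mem (ihy g)
  have hKlam : ∀ x ∈ K, ∀ a : A, -a + S.mul a x ∈ K := by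
    intro x hx
    induction hx using AddSubgroup.closure_induction with
    | mem y hy =>
      intro a
      rcases hy with hy | ⟨c, b, -, rfl⟩
      · exact hIK (hI.2 a y hy)
      · have h2 : sbLam S a (star S c b) ∈ K := by
          rw [sbLam_star]; exact hs1mem _ _
        exact h2
    | zero =>
      intro a
      have h2 : sbLam S a 0 ∈ K := by rw [sbLam_zero]; exact K.zero_mem
      exact h2
    | add y z hy hz ihy ihz =>
      intro a
      have h2 : sbLam S a (y + z) ∈ K := by
        rw [sbLam_add]; exact K.add_mem (ihy a) (ihz a)
      exact h2
    | neg y hy ihy =>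
      intro a
      have h2 : sbLam S a (-y) ∈ K := by
        rw [sbLam_neg]; exact K.neg_mem (ihy a)
      exact h2
  have hKstrong : IsStrongLeftIdeal S K :=
    ⟨⟨fun x hx g => hKconj x hx g⟩, fun a x hx => hKlam x hx a⟩
  have hKtop : K = ⊤ :=
    hgen K hKstrong (fun x hx => hIK (hXI hx))
      (by rw [hlp1]
          exact SetLike.coe_subset_coe.mpr ((AddSubgroup.closure_le K).mpr hs1K))
  set π : A →+ A ⧸ I := QuotientAddGroup.mk' I with hπdef
  have hπs : Function.Surjective π := QuotientAddGroup.mk'_surjective I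
  have hπ0 : ∀ x ∈ I, π x = 0 := fun x hx => (QuotientAddGroup.eq_zero_iff x).mpr hx
  have hmapK : (AddSubgroup.closure ((I : Set A) ∪ s1)).map π = ⊤ := by
    rw [← hKdef, hKtop]
    exact AddSubgroup.map_top_of_surjective π hπs
  have hmap1 : (lpow S 1).map π = ⊤ := by
    rw [hlp1, AddMonoidHom.map_closure]
    refine le_antisymm le_top ?_
    rw [AddMonoidHom.map_closure] at hmapK
    rw [← hmapK]
    refine (AddSubgroup.closure_le _).mpr ?_
    rintro z ⟨w, hw, rfl⟩
    rcases hw with hw | hw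
    · rw [hπ0 w hw]; exact AddSubgroup.zero_mem _
    · exact AddSubgroup.subset_closure ⟨w, hw, rfl⟩
  have key : ∀ m : ℕ, (lpow S (m + 1)).map π = ⊤ := by
    intro m
    induction m with
    | zero => exact hmap1
    | succ m ih =>
      refine le_antisymm le_top ?_
      have hsub : π '' s1 ⊆ ((lpow S (m + 2)).map π : Set (A ⧸ I)) := by
        rintro z ⟨w, ⟨a, x, -, rfl⟩, rfl⟩
        have hx' : π x ∈ (lpow S (m + 1)).map π := by
          rw [ih]; exact AddSubgroup.mem_top _
        obtain ⟨b, hb, hbx⟩ := hx'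
        have hj : x - b ∈ I := by
          have h0 : π (x - b) = 0 := by rw [map_sub, hbx, sub_self]
          exact (QuotientAddGroup.eq_zero_iff _).mp h0
        have hstar : star S a x = star S a (x - b) + (x - b) + star S a b + -(x - b) := by
          conv_lhs => rw [show x = (x - b) + b from (sub_add_cancel x b).symm]
          exact sbStar_add S a (x - b) b
        have h1 : π (star S a x) = π (star S a b) := by
          rw [hstar, map_add, map_add, map_add, map_neg,
            hπ0 _ (sbStar_mem_of_mem S hI hj a), hπ0 _ hj]
          simp
        rw [h1]
        exact ⟨star S a b, AddSubgroup.subset_closure ⟨a, b, hb, rfl⟩, rfl⟩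
      calc (⊤ : AddSubgroup (A ⧸ I)) = (lpow S 1).map π := hmap1.symm
        _ = AddSubgroup.closure (π '' s1) := by rw [hlp1, AddMonoidHom.map_closure]
        _ ≤ (lpow S (m + 2)).map π := (AddSubgroup.closure_le _).mpr hsub
  cases n with
  | zero =>
    have h0 : ∀ x : A, x ∈ (⊥ : AddSubgroup A) := by
      intro x; rw [← hn]; exact AddSubgroup.mem_top x
    refine (AddSubgroup.eq_top_iff' I).mpr fun x => ?_
    have hx := h0 x
    rw [AddSubgroup.mem_bot] at hx
    rw [hx]; exact I.zero_mem
  | succ m =>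
    have h1 := key m
    rw [hn, AddSubgroup.map_bot] at h1
    refine (AddSubgroup.eq_top_iff' I).mpr fun x => ?_
    have hx : π x ∈ (⊥ : AddSubgroup (A ⧸ I)) := by
      rw [h1]; exact AddSubgroup.mem_top _
    rw [AddSubgroup.mem_bot] at hx
    exact (QuotientAddGroup.eq_zero_iff x).mp hx
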